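/- Let K and L be compact convex bodies in ℝⁿ that are symmetric with respect to the origin (K = −K and L = −L). Then for every z ∈ ℝⁿ, vol(K ∩ (z + L)) ≤ vol(K ∩ L); equivalently, sup_{z∈ℝⁿ} |K ∩ (z + L)| = |K ∩ L|. -/

import Mathlib

open MeasureTheory Set
open scoped Pointwise

/-!
Put `A = K ∩ (z + L)`. For `x, y ∈ A` the point `(x - y) / 2` is the midpoint of `x` and `-y`,
both in `K`, and, writing `x = z + l` and `y = z + l'`, the midpoint of `l` and `-l'`, both in `L`.
Hence `½ • (A - A) ⊆ K ∩ L`, and the Brunn–Minkowski inequality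
`|½ • A + ½ • (-A)| ^ (1/n) ≥ |½ • A| ^ (1/n) + |½ • (-A)| ^ (1/n) = |A| ^ (1/n)` gives
`|A| ≤ |K ∩ L|`.

Brunn–Minkowski is proved by the Hadwiger–Ohmann argument. For two finite unions of disjoint boxes
one inducts on the total number of boxes: a coordinate hyperplane separating two boxes of the first
union cuts it into two unions with fewer boxes, a parallel hyperplane cuts the second union in the
same volume ratio, and the inequalities for the two halves add up. Two single boxes are handled by
AM-GM. Compact sets are approximated from outside by unions of grid cubes.
-/

namespace BrunnMinkowski

lemma prod_rpow_inv_card_add_le {ι : Type*} [Fintype ι] [Nonempty ι] {x y : ι → ℝ}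
    (hx : ∀ i, 0 < x i) (hy : ∀ i, 0 < y i) :
    (∏ i, x i) ^ (Fintype.card ι : ℝ)⁻¹ + (∏ i, y i) ^ (Fintype.card ι : ℝ)⁻¹ ≤
      (∏ i, (x i + y i)) ^ (Fintype.card ι : ℝ)⁻¹ := by
  set n : ℝ := (Fintype.card ι : ℝ)
  have hn : 0 < n := Nat.cast_pos.2 Fintype.card_pos
  have hxy : ∀ i, 0 < x i + y i := fun i => add_pos (hx i) (hy i)
  have amgm : ∀ z : ι → ℝ, (∀ i, 0 ≤ z i) → (∏ i, z i) ^ n⁻¹ ≤ (∑ i, z i) / n := by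
    intro z hz
    simpa using Real.geom_mean_le_arith_mean Finset.univ 1 z (by simp)
      (by simpa using Fintype.card_pos) fun i _ => hz i
  -- normalise both products by `∏ (x i + y i)` and apply AM-GM to the ratios
  have normalise : ∀ z : ι → ℝ, ∏ i, z i = (∏ i, z i / (x i + y i)) * ∏ i, (x i + y i) := by
    intro z
    rw [← Finset.prod_mul_distrib]
    exact Finset.prod_congr rfl fun i _ => (div_mul_cancel₀ _ (hxy i).ne').symm
  have hP : 0 ≤ ∏ i, (x i + y i) := Finset.prod_nonneg fun i _ => (hxy i).le
  have ratio_nonneg : ∀ z : ι → ℝ, (∀ i, 0 < z i) → 0 ≤ ∏ i, z i / (x i + y i) :=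
    fun z hz => Finset.prod_nonneg fun i _ => (div_pos (hz i) (hxy i)).le
  rw [normalise x, normalise y, Real.mul_rpow (ratio_nonneg x hx) hP,
    Real.mul_rpow (ratio_nonneg y hy) hP, ← add_mul]
  refine mul_le_of_le_one_left (by positivity) ?_
  calc _ ≤ (∑ i, x i / (x i + y i)) / n + (∑ i, y i / (x i + y i)) / n :=
        add_le_add (amgm _ fun i => (div_pos (hx i) (hxy i)).le)
          (amgm _ fun i => (div_pos (hy i) (hxy i)).le)
    _ = 1 := by
        rw [← add_div, ← Finset.sum_add_distrib, div_eq_one_iff_eq hn.ne']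
        simp [← add_div, div_self (hxy _).ne', n]

lemma rpow_inv_add_rpow_inv_le_of_split {n : ℕ} (hn : n ≠ 0) {θ x y v₁ v₂ v : ℝ}
    (hθ₀ : 0 ≤ θ) (hθ₁ : θ ≤ 1) (hx : 0 ≤ x) (hy : 0 ≤ y) (hv₁ : 0 ≤ v₁) (hv₂ : 0 ≤ v₂)
    (h₁ : (θ * x) ^ (n : ℝ)⁻¹ + (θ * y) ^ (n : ℝ)⁻¹ ≤ v₁ ^ (n : ℝ)⁻¹)
    (h₂ : ((1 - θ) * x) ^ (n : ℝ)⁻¹ + ((1 - θ) * y) ^ (n : ℝ)⁻¹ ≤ v₂ ^ (n : ℝ)⁻¹)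
    (hv : v₁ + v₂ ≤ v) :
    x ^ (n : ℝ)⁻¹ + y ^ (n : ℝ)⁻¹ ≤ v ^ (n : ℝ)⁻¹ := by
  have hn' : (0 : ℝ) < n := Nat.cast_pos.2 (Nat.pos_of_ne_zero hn)
  set S := x ^ (n : ℝ)⁻¹ + y ^ (n : ℝ)⁻¹
  have hS : 0 ≤ S := by positivity
  -- both sides of `hᵢ` scale like `τ ^ (1 / n)`, so `hᵢ` says that `τ * S ^ n ≤ vᵢ`
  have scale : ∀ τ w : ℝ, 0 ≤ τ → 0 ≤ w →
      (τ * x) ^ (n : ℝ)⁻¹ + (τ * y) ^ (n : ℝ)⁻¹ ≤ w ^ (n : ℝ)⁻¹ → τ * S ^ n ≤ w := by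
    intro τ w hτ hw h
    rw [Real.mul_rpow hτ hx, Real.mul_rpow hτ hy, ← mul_add,
      Real.le_rpow_inv_iff_of_pos (by positivity) hw hn', Real.rpow_natCast, mul_pow,
      Real.rpow_inv_natCast_pow hτ hn] at h
    exact h
  rw [Real.le_rpow_inv_iff_of_pos hS (hv₁.trans (by linarith)) hn', Real.rpow_natCast]
  linarith [scale θ v₁ hθ₀ hv₁ h₁, scale (1 - θ) v₂ (by linarith) hv₂ h₂]

section Trace

variable {α : Type*}

open Classical in
noncomputable def trace (F : Finset (Set α)) (H : Set α) : Finset (Set α) :=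
  (F.image (· ∩ H)).filter Set.Nonempty

lemma sUnion_trace (F : Finset (Set α)) (H : Set α) :
    ⋃₀ (trace F H : Set (Set α)) = ⋃₀ ↑F ∩ H := by
  ext x
  simp only [trace, Finset.coe_filter, Finset.mem_image, mem_sUnion, mem_ofPred_eq, mem_inter_iff,
    Finset.mem_coe]
  constructor
  · rintro ⟨_, ⟨⟨s, hs, rfl⟩, -⟩, hxs, hxH⟩
    exact ⟨⟨s, hs, hxs⟩, hxH⟩
  · rintro ⟨⟨s, hs, hxs⟩, hxH⟩
    exact ⟨s ∩ H, ⟨⟨s, hs, rfl⟩, x, hxs, hxH⟩, hxs, hxH⟩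

lemma card_trace_le (F : Finset (Set α)) (H : Set α) : (trace F H).card ≤ F.card := by
  classical
  exact (Finset.card_filter_le _ _).trans Finset.card_image_le

lemma card_trace_lt {F : Finset (Set α)} {H s : Set α} (hs : s ∈ F) (hsH : Disjoint s H) :
    (trace F H).card < F.card := by
  classical
  refine (Finset.card_lt_card (Finset.filter_ssubset.2
    ⟨s ∩ H, Finset.mem_image_of_mem (· ∩ H) hs, ?_⟩)).trans_le Finset.card_image_le
  rw [not_nonempty_iff_eq_empty, ← disjoint_iff_inter_eq_empty]
  exact hsH

lemma trace_nonempty_iff {F : Finset (Set α)} {H : Set α} :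
    (trace F H).Nonempty ↔ (⋃₀ ↑F ∩ H).Nonempty := by
  rw [← sUnion_trace]
  constructor
  · rintro ⟨t, ht⟩
    classical
    obtain ⟨x, hx⟩ := (Finset.mem_filter.1 ht).2
    exact ⟨x, t, ht, hx⟩
  · rintro ⟨x, t, ht, -⟩
    exact ⟨t, ht⟩

end Trace

section Boxes

variable {ι : Type*}

def box (a b : ι → ℝ) : Set (ι → ℝ) := univ.pi fun i => Ico (a i) (b i)

def IsBox (s : Set (ι → ℝ)) : Prop := ∃ a b : ι → ℝ, (∀ i, a i < b i) ∧ s = box a b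

lemma box_nonempty_iff {a b : ι → ℝ} : (box a b).Nonempty ↔ ∀ i, a i < b i := by
  simp [box, univ_pi_nonempty_iff]

lemma IsBox.nonempty {s : Set (ι → ℝ)} (hs : IsBox s) : s.Nonempty := by
  obtain ⟨a, b, hab, rfl⟩ := hs
  exact box_nonempty_iff.2 hab

lemma isBox_box {a b : ι → ℝ} (h : (box a b).Nonempty) : IsBox (box a b) :=
  ⟨a, b, box_nonempty_iff.1 h, rfl⟩

lemma box_inter_lt [DecidableEq ι] (a b : ι → ℝ) (i : ι) (t : ℝ) :
    box a b ∩ {x | x i < t} = box a (Function.update b i (min (b i) t)) := by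
  ext x
  simp only [box, mem_inter_iff, mem_univ_pi, mem_ofPred_eq, mem_Ico, Function.update_apply]
  grind

lemma box_inter_ge [DecidableEq ι] (a b : ι → ℝ) (i : ι) (t : ℝ) :
    box a b ∩ {x | t ≤ x i} = box (Function.update a i (max (a i) t)) b := by
  ext x
  simp only [box, mem_inter_iff, mem_univ_pi, mem_ofPred_eq, mem_Ico, Function.update_apply]
  grind

lemma IsBox.inter_lt {s : Set (ι → ℝ)} (hs : IsBox s) (i : ι) (t : ℝ)
    (h : (s ∩ {x | x i < t}).Nonempty) : IsBox (s ∩ {x | x i < t}) := by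
  classical
  obtain ⟨a, b, -, rfl⟩ := hs
  rw [box_inter_lt] at h ⊢
  exact isBox_box h

lemma IsBox.inter_ge {s : Set (ι → ℝ)} (hs : IsBox s) (i : ι) (t : ℝ)
    (h : (s ∩ {x | t ≤ x i}).Nonempty) : IsBox (s ∩ {x | t ≤ x i}) := by
  classical
  obtain ⟨a, b, -, rfl⟩ := hs
  rw [box_inter_ge] at h ⊢
  exact isBox_box h

lemma IsBox.exists_separating_hyperplane {s t : Set (ι → ℝ)} (hs : IsBox s) (ht : IsBox t)
    (hst : Disjoint s t) : ∃ i c, s ⊆ {x | x i < c} ∧ t ⊆ {x | c ≤ x i} ∨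
      t ⊆ {x | x i < c} ∧ s ⊆ {x | c ≤ x i} := by
  obtain ⟨a, b, hab, rfl⟩ := hs
  obtain ⟨a', b', hab', rfl⟩ := ht
  have : ∃ i, b i ≤ a' i ∨ b' i ≤ a i := by
    by_contra! h
    refine hst.ne_of_mem (a := fun i => max (a i) (a' i)) (b := fun i => max (a i) (a' i))
      ?_ ?_ rfl <;> intro i _
    · exact ⟨le_max_left _ _, max_lt (hab i) (h i).1⟩
    · exact ⟨le_max_right _ _, max_lt (h i).2 (hab' i)⟩
  obtain ⟨i, hi | hi⟩ := this
  · exact ⟨i, b i, .inl ⟨fun x hx => (hx i trivial).2, fun x hx => hi.trans (hx i trivial).1⟩⟩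
  · exact ⟨i, b' i, .inr ⟨fun x hx => (hx i trivial).2, fun x hx => hi.trans (hx i trivial).1⟩⟩

lemma Ico_subset_Ico_add_Ico {a b c d : ℝ} (hab : a < b) (hcd : c < d) :
    Ico (a + c) (b + d) ⊆ Ico a b + Ico c d := by
  rintro t ⟨hlo, hhi⟩
  have hD : 0 < b - a + (d - c) := by linarith
  -- split `t - (a + c)` between the two intervals in proportion to their lengths
  set r := (t - (a + c)) / (b - a + (d - c))
  have hr₀ : 0 ≤ r := div_nonneg (by linarith) hD.le
  have hr₁ : r < 1 := (div_lt_one hD).2 (by linarith)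
  have hr : r * (b - a + (d - c)) = t - (a + c) := div_mul_cancel₀ _ hD.ne'
  refine ⟨a + r * (b - a), ⟨by nlinarith, by nlinarith⟩, c + r * (d - c),
    ⟨by nlinarith, by nlinarith⟩, by linear_combination hr⟩

lemma box_add_subset_add_box {a b c d : ι → ℝ} (hab : ∀ i, a i < b i) (hcd : ∀ i, c i < d i) :
    box (a + c) (b + d) ⊆ box a b + box c d := by
  intro x hx
  choose u hu v hv huv using fun i => Ico_subset_Ico_add_Ico (hab i) (hcd i) (hx i trivial)
  exact ⟨u, fun i _ => hu i, v, fun i _ => hv i, funext huv⟩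

lemma measurableSet_halfspace_lt (i : ι) (c : ℝ) : MeasurableSet {x : ι → ℝ | x i < c} :=
  measurableSet_lt (measurable_pi_apply i) measurable_const

def gridCube (δ : ℝ) (m : ι → ℤ) : Set (ι → ℝ) := box (fun j => m j * δ) (fun j => m j * δ + δ)

lemma mem_gridCube_iff {δ : ℝ} (hδ : 0 < δ) {m : ι → ℤ} {x : ι → ℝ} :
    x ∈ gridCube δ m ↔ (fun j => ⌊x j / δ⌋) = m := by
  simp only [gridCube, box, mem_univ_pi, mem_Ico, funext_iff, Int.floor_eq_iff, le_div_iff₀ hδ,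
    div_lt_iff₀ hδ, add_mul, one_mul]

lemma norm_sub_le_of_mem_gridCube [Fintype ι] {δ : ℝ} (hδ : 0 < δ) {m : ι → ℤ} {x y : ι → ℝ}
    (hx : x ∈ gridCube δ m) (hy : y ∈ gridCube δ m) : ‖y - x‖ ≤ δ := by
  refine (pi_norm_le_iff_of_nonneg hδ.le).2 fun j => ?_
  have hxj := hx j trivial
  have hyj := hy j trivial
  rw [Real.norm_eq_abs, Pi.sub_apply, abs_le]
  constructor <;> linarith [hxj.1, hxj.2, hyj.1, hyj.2]

lemma isBox_gridCube {δ : ℝ} (hδ : 0 < δ) (m : ι → ℤ) : IsBox (gridCube δ m) :=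
  ⟨_, _, fun _ => lt_add_of_pos_right _ hδ, rfl⟩

structure IsBoxPacking (F : Finset (Set (ι → ℝ))) : Prop where
  isBox : ∀ s ∈ F, IsBox s
  pairwiseDisjoint : (F : Set (Set (ι → ℝ))).PairwiseDisjoint id

lemma isBoxPacking_trace {F : Finset (Set (ι → ℝ))} (hF : IsBoxPacking F) {H : Set (ι → ℝ)}
    (hH : ∀ s, IsBox s → (s ∩ H).Nonempty → IsBox (s ∩ H)) : IsBoxPacking (trace F H) := by
  classical
  have mem_trace : ∀ t ∈ trace F H, ∃ s ∈ F, s ∩ H = t ∧ t.Nonempty := by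
    intro t ht
    obtain ⟨ht, hne⟩ := Finset.mem_filter.1 ht
    obtain ⟨s, hs, rfl⟩ := Finset.mem_image.1 ht
    exact ⟨s, hs, rfl, hne⟩
  refine ⟨fun t ht => ?_, fun t ht t' ht' htt' => ?_⟩
  · obtain ⟨s, hs, rfl, hne⟩ := mem_trace t ht
    exact hH s (hF.isBox s hs) hne
  · obtain ⟨s, hs, rfl, -⟩ := mem_trace t ht
    obtain ⟨s', hs', rfl, -⟩ := mem_trace t' ht'
    have hss' : s ≠ s' := by rintro rfl; exact htt' rfl
    exact (hF.pairwiseDisjoint hs hs' hss').mono inter_subset_left inter_subset_left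

lemma IsBoxPacking.trace_lt {F : Finset (Set (ι → ℝ))} (hF : IsBoxPacking F) (i : ι) (c : ℝ) :
    IsBoxPacking (trace F {x | x i < c}) :=
  isBoxPacking_trace hF fun _ hs => hs.inter_lt i c

lemma IsBoxPacking.trace_ge {F : Finset (Set (ι → ℝ))} (hF : IsBoxPacking F) (i : ι) (c : ℝ) :
    IsBoxPacking (trace F {x | c ≤ x i}) :=
  isBoxPacking_trace hF fun _ hs => hs.inter_ge i c

lemma IsBoxPacking.exists_split {F : Finset (Set (ι → ℝ))} (hF : IsBoxPacking F)
    (hF₂ : 2 ≤ F.card) : ∃ i c,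
      (trace F {x | x i < c}).Nonempty ∧ (trace F {x | x i < c}).card < F.card ∧
      (trace F {x | c ≤ x i}).Nonempty ∧ (trace F {x | c ≤ x i}).card < F.card := by
  obtain ⟨s, hs, t, ht, hst⟩ := Finset.one_lt_card.1 hF₂
  have key : ∀ s ∈ F, ∀ t ∈ F, ∀ i c, s ⊆ {x | x i < c} → t ⊆ {x | c ≤ x i} →
      (trace F {x | x i < c}).Nonempty ∧ (trace F {x | x i < c}).card < F.card ∧
      (trace F {x | c ≤ x i}).Nonempty ∧ (trace F {x | c ≤ x i}).card < F.card := by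
    intro s hs t ht i c hsc htc
    have hs' := (hF.isBox s hs).nonempty
    have ht' := (hF.isBox t ht).nonempty
    refine ⟨trace_nonempty_iff.2 (hs'.mono (subset_inter (subset_sUnion_of_mem hs) hsc)),
      card_trace_lt ht ?_,
      trace_nonempty_iff.2 (ht'.mono (subset_inter (subset_sUnion_of_mem ht) htc)),
      card_trace_lt hs ?_⟩
    · exact disjoint_of_subset_left htc (disjoint_left.2 fun x (hx : c ≤ x i) => hx.not_gt)
    · exact disjoint_of_subset_left hsc (disjoint_left.2 fun x (hx : x i < c) => hx.not_ge)
  obtain ⟨i, c, ⟨hsc, htc⟩ | ⟨htc, hsc⟩⟩ := (hF.isBox s hs).exists_separating_hyperplane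
    (hF.isBox t ht) (hF.pairwiseDisjoint hs ht hst)
  · exact ⟨i, c, key s hs t ht i c hsc htc⟩
  · exact ⟨i, c, key t ht s hs i c htc hsc⟩

variable [Fintype ι]

lemma IsBox.measurableSet {s : Set (ι → ℝ)} (hs : IsBox s) : MeasurableSet s := by
  obtain ⟨a, b, -, rfl⟩ := hs
  exact .univ_pi fun _ => measurableSet_Ico

lemma IsBox.isBounded {s : Set (ι → ℝ)} (hs : IsBox s) : Bornology.IsBounded s := by
  obtain ⟨a, b, -, rfl⟩ := hs
  exact (Metric.isBounded_Icc a b).subset fun x hx =>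
    ⟨fun i => (hx i trivial).1, fun i => (hx i trivial).2.le⟩

lemma volume_real_box {a b : ι → ℝ} (h : a ≤ b) : volume.real (box a b) = ∏ i, (b i - a i) :=
  Real.volume_pi_Ico_toReal h

lemma IsBox.volume_real_pos {s : Set (ι → ℝ)} (hs : IsBox s) : 0 < volume.real s := by
  obtain ⟨a, b, hab, rfl⟩ := hs
  rw [volume_real_box fun i => (hab i).le]
  exact Finset.prod_pos fun i _ => sub_pos.2 (hab i)

lemma continuous_volume_real_box_inter_lt (a b : ι → ℝ) (i : ι) :
    Continuous fun t => volume.real (box a b ∩ {x | x i < t}) := by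
  classical
  simp_rw [box_inter_lt, Measure.real, box, Real.volume_pi_Ico, ENNReal.toReal_prod,
    ENNReal.toReal_ofReal', Function.update_apply]
  refine continuous_finsetProd _ fun j _ => ?_
  split_ifs <;> fun_prop

lemma IsBoxPacking.isBounded {F : Finset (Set (ι → ℝ))} (hF : IsBoxPacking F) :
    Bornology.IsBounded (⋃₀ (F : Set (Set (ι → ℝ)))) :=
  (Bornology.isBounded_sUnion F.finite_toSet).2 fun s hs => (hF.isBox s hs).isBounded

lemma IsBoxPacking.volume_real_pos {F : Finset (Set (ι → ℝ))} (hF : IsBoxPacking F)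
    (hne : F.Nonempty) : 0 < volume.real (⋃₀ (F : Set (Set (ι → ℝ)))) := by
  obtain ⟨s, hs⟩ := hne
  exact (hF.isBox s hs).volume_real_pos.trans_le
    (measureReal_mono (subset_sUnion_of_mem hs) hF.isBounded.measure_lt_top.ne)

lemma IsBoxPacking.continuous_volume_real_inter_lt {F : Finset (Set (ι → ℝ))}
    (hF : IsBoxPacking F) (i : ι) :
    Continuous fun t => volume.real (⋃₀ (F : Set (Set (ι → ℝ))) ∩ {x | x i < t}) := by
  have hsplit : ∀ t, volume.real (⋃₀ (F : Set (Set (ι → ℝ))) ∩ {x | x i < t}) =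
      ∑ s ∈ F, volume.real (s ∩ {x | x i < t}) := by
    intro t
    rw [sUnion_eq_biUnion, iUnion₂_inter]
    exact measureReal_biUnion_finset
      (hF.pairwiseDisjoint.mono_on fun s _ => inter_subset_left)
      (fun s hs => (hF.isBox s hs).measurableSet.inter (measurableSet_halfspace_lt i t))
      (fun s hs => ((hF.isBox s hs).isBounded.subset inter_subset_left).measure_lt_top.ne)
  simp_rw [hsplit]
  refine continuous_finsetSum _ fun s hs => ?_
  obtain ⟨a, b, -, rfl⟩ := hF.isBox s hs
  exact continuous_volume_real_box_inter_lt a b i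

lemma exists_volume_real_inter_lt_eq {s : Set (ι → ℝ)} (hs : Bornology.IsBounded s) (i : ι)
    (hcont : Continuous fun t => volume.real (s ∩ {x | x i < t})) {r : ℝ} (hr₀ : 0 ≤ r)
    (hr : r ≤ volume.real s) : ∃ d, volume.real (s ∩ {x | x i < d}) = r := by
  obtain ⟨R, -, hR⟩ := hs.subset_closedBall_lt 0 0
  have hcoord : ∀ x ∈ s, |x i| ≤ R := fun x hx =>
    (norm_le_pi_norm x i).trans (mem_closedBall_zero_iff.1 (hR hx))
  have hbelow : s ∩ {x | x i < -R} = ∅ :=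
    eq_empty_of_forall_notMem fun x ⟨hx, (hxi : x i < -R)⟩ => by
      linarith [neg_abs_le (x i), hcoord x hx]
  have habove : s ∩ {x | x i < R + 1} = s :=
    inter_eq_left.2 fun x hx => show x i < R + 1 by linarith [le_abs_self (x i), hcoord x hx]
  obtain ⟨d, hd⟩ := intermediate_value_univ (-R) (R + 1) hcont
    (by simp only [hbelow, habove, measureReal_empty]; exact ⟨hr₀, hr⟩)
  exact ⟨d, hd⟩

lemma volume_real_inter_lt_add_inter_ge {A : Set (ι → ℝ)} (hA : volume A ≠ ⊤) (i : ι) (c : ℝ) :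
    volume.real (A ∩ {x | x i < c}) + volume.real (A ∩ {x | c ≤ x i}) = volume.real A := by
  have : A ∩ {x | c ≤ x i} = A \ {x | x i < c} := by ext; simp
  rw [this, measureReal_inter_add_sdiff (measurableSet_halfspace_lt i c) hA]

lemma volume_real_add_halves_le {A B : Set (ι → ℝ)} (hAB : volume (A + B) ≠ ⊤) (i : ι)
    (c d : ℝ) :
    volume.real (A ∩ {x | x i < c} + B ∩ {x | x i < d}) +
      volume.real (A ∩ {x | c ≤ x i} + B ∩ {x | d ≤ x i}) ≤ volume.real (A + B) := by
  have hlow : A ∩ {x | x i < c} + B ∩ {x | x i < d} ⊆ (A + B) ∩ {x | x i < c + d} := by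
    rintro _ ⟨u, ⟨hu, hui⟩, v, ⟨hv, hvi⟩, rfl⟩
    exact ⟨add_mem_add hu hv, show u i + v i < c + d from add_lt_add hui hvi⟩
  have hhigh : A ∩ {x | c ≤ x i} + B ∩ {x | d ≤ x i} ⊆ (A + B) ∩ {x | c + d ≤ x i} := by
    rintro _ ⟨u, ⟨hu, hui⟩, v, ⟨hv, hvi⟩, rfl⟩
    exact ⟨add_mem_add hu hv, show c + d ≤ u i + v i from add_le_add hui hvi⟩
  rw [← volume_real_inter_lt_add_inter_ge hAB i (c + d)]
  exact add_le_add (measureReal_mono hlow (measure_ne_top_of_subset inter_subset_left hAB))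
    (measureReal_mono hhigh (measure_ne_top_of_subset inter_subset_left hAB))

def BrunnMinkowskiIneq (A B : Set (ι → ℝ)) : Prop :=
  volume.real A ^ (Fintype.card ι : ℝ)⁻¹ + volume.real B ^ (Fintype.card ι : ℝ)⁻¹ ≤
    volume.real (A + B) ^ (Fintype.card ι : ℝ)⁻¹

lemma brunnMinkowskiIneq_comm {A B : Set (ι → ℝ)} :
    BrunnMinkowskiIneq A B ↔ BrunnMinkowskiIneq B A := by
  rw [BrunnMinkowskiIneq, BrunnMinkowskiIneq, add_comm A, add_comm (volume.real A ^ _)]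

lemma brunnMinkowskiIneq_of_isBox [Nonempty ι] {s t : Set (ι → ℝ)} (hs : IsBox s)
    (ht : IsBox t) : BrunnMinkowskiIneq s t := by
  have hst : volume (s + t) ≠ ⊤ := (hs.isBounded.add ht.isBounded).measure_lt_top.ne
  obtain ⟨a, b, hab, rfl⟩ := hs
  obtain ⟨c, d, hcd, rfl⟩ := ht
  have hsides : ∀ i, (b + d) i - (a + c) i = (b i - a i) + (d i - c i) := fun i => by
    simp only [Pi.add_apply]; ring
  rw [BrunnMinkowskiIneq, volume_real_box fun i => (hab i).le, volume_real_box fun i => (hcd i).le]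
  calc _ ≤ (∏ i, ((b i - a i) + (d i - c i))) ^ (Fintype.card ι : ℝ)⁻¹ :=
        prod_rpow_inv_card_add_le (fun i => sub_pos.2 (hab i)) (fun i => sub_pos.2 (hcd i))
    _ = volume.real (box (a + c) (b + d)) ^ (Fintype.card ι : ℝ)⁻¹ := by
        rw [volume_real_box (a := a + c) (b := b + d) fun i => add_le_add (hab i).le (hcd i).le]
        simp_rw [hsides]
    _ ≤ _ := Real.rpow_le_rpow measureReal_nonneg
        (measureReal_mono (box_add_subset_add_box hab hcd) hst) (by positivity)

lemma brunnMinkowskiIneq_of_split [Nonempty ι] {A B : Set (ι → ℝ)} (hA : volume A ≠ ⊤)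
    (hB : volume B ≠ ⊤) (hAB : volume (A + B) ≠ ⊤) {i : ι} {c d θ : ℝ} (hθ₀ : 0 ≤ θ)
    (hθ₁ : θ ≤ 1) (hAc : volume.real (A ∩ {x | x i < c}) = θ * volume.real A)
    (hBd : volume.real (B ∩ {x | x i < d}) = θ * volume.real B)
    (hlow : BrunnMinkowskiIneq (A ∩ {x | x i < c}) (B ∩ {x | x i < d}))
    (hhigh : BrunnMinkowskiIneq (A ∩ {x | c ≤ x i}) (B ∩ {x | d ≤ x i})) :
    BrunnMinkowskiIneq A B := by
  have hAc' : volume.real (A ∩ {x | c ≤ x i}) = (1 - θ) * volume.real A := by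
    linarith [volume_real_inter_lt_add_inter_ge hA i c]
  have hBd' : volume.real (B ∩ {x | d ≤ x i}) = (1 - θ) * volume.real B := by
    linarith [volume_real_inter_lt_add_inter_ge hB i d]
  rw [BrunnMinkowskiIneq, hAc, hBd] at hlow
  rw [BrunnMinkowskiIneq, hAc', hBd'] at hhigh
  exact rpow_inv_add_rpow_inv_le_of_split Fintype.card_ne_zero hθ₀ hθ₁ measureReal_nonneg
    measureReal_nonneg measureReal_nonneg measureReal_nonneg hlow hhigh
    (volume_real_add_halves_le hAB i c d)

lemma IsBoxPacking.brunnMinkowskiIneq_of_two_le_card [Nonempty ι] {F G : Finset (Set (ι → ℝ))}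
    (hF : IsBoxPacking F) (hG : IsBoxPacking G) (hGne : G.Nonempty) (hF₂ : 2 ≤ F.card)
    (ih : ∀ F' G' : Finset (Set (ι → ℝ)), F'.card < F.card → G'.card ≤ G.card →
      IsBoxPacking F' → IsBoxPacking G' → F'.Nonempty → G'.Nonempty →
      BrunnMinkowskiIneq (⋃₀ (F' : Set (Set (ι → ℝ)))) (⋃₀ (G' : Set (Set (ι → ℝ))))) :
    BrunnMinkowskiIneq (⋃₀ (F : Set (Set (ι → ℝ)))) (⋃₀ (G : Set (Set (ι → ℝ)))) := by
  obtain ⟨i, c, hlow_ne, hlow_card, hhigh_ne, hhigh_card⟩ := hF.exists_split hF₂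
  set A := ⋃₀ (F : Set (Set (ι → ℝ)))
  set B := ⋃₀ (G : Set (Set (ι → ℝ)))
  have hA : volume A ≠ ⊤ := hF.isBounded.measure_lt_top.ne
  have hB : volume B ≠ ⊤ := hG.isBounded.measure_lt_top.ne
  have hAlow : 0 < volume.real (A ∩ {x | x i < c}) := by
    simpa only [sUnion_trace] using (hF.trace_lt i c).volume_real_pos hlow_ne
  have hAhigh : 0 < volume.real (A ∩ {x | c ≤ x i}) := by
    simpa only [sUnion_trace] using (hF.trace_ge i c).volume_real_pos hhigh_ne
  have hAsplit := volume_real_inter_lt_add_inter_ge hA i c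
  -- `θ` is the proportion of `A` below the cut; `B` is cut at the same proportion
  set θ := volume.real (A ∩ {x | x i < c}) / volume.real A
  have hθ₀ : 0 < θ := div_pos hAlow (by linarith)
  have hθ₁ : θ < 1 := (div_lt_one (by linarith)).2 (by linarith)
  obtain ⟨d, hd⟩ := exists_volume_real_inter_lt_eq hG.isBounded i
    (hG.continuous_volume_real_inter_lt i) (r := θ * volume.real B) (by positivity)
    (mul_le_of_le_one_left measureReal_nonneg hθ₁.le)
  have hBpos := hG.volume_real_pos hGne
  have hBsplit := volume_real_inter_lt_add_inter_ge hB i d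
  refine brunnMinkowskiIneq_of_split hA hB (hF.isBounded.add hG.isBounded).measure_lt_top.ne
    hθ₀.le hθ₁.le (div_mul_cancel₀ _ (by linarith)).symm hd ?_ ?_
  · rw [← sUnion_trace, ← sUnion_trace]
    refine ih _ _ hlow_card (card_trace_le _ _) (hF.trace_lt i c) (hG.trace_lt i d) hlow_ne
      (trace_nonempty_iff.2 (nonempty_of_measureReal_ne_zero (μ := volume) (ne_of_gt ?_)))
    rw [hd]
    positivity
  · rw [← sUnion_trace, ← sUnion_trace]
    refine ih _ _ hhigh_card (card_trace_le _ _) (hF.trace_ge i c) (hG.trace_ge i d) hhigh_ne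
      (trace_nonempty_iff.2 (nonempty_of_measureReal_ne_zero (μ := volume) (ne_of_gt ?_)))
    nlinarith

theorem IsBoxPacking.brunnMinkowskiIneq [Nonempty ι] {F G : Finset (Set (ι → ℝ))}
    (hF : IsBoxPacking F) (hG : IsBoxPacking G) (hFne : F.Nonempty) (hGne : G.Nonempty) :
    BrunnMinkowskiIneq (⋃₀ (F : Set (Set (ι → ℝ)))) (⋃₀ (G : Set (Set (ι → ℝ)))) := by
  induction hN : F.card + G.card using Nat.strong_induction_on generalizing F G with
  | _ N ih =>
  rcases le_or_gt 2 F.card with hF₂ | hF₂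
  · exact hF.brunnMinkowskiIneq_of_two_le_card hG hGne hF₂
      fun F' G' h₁ h₂ hF' hG' hF'ne hG'ne => ih _ (by omega) hF' hG' hF'ne hG'ne rfl
  rcases le_or_gt 2 G.card with hG₂ | hG₂
  · exact brunnMinkowskiIneq_comm.1 <| hG.brunnMinkowskiIneq_of_two_le_card hF hFne hG₂
      fun F' G' h₁ h₂ hF' hG' hF'ne hG'ne => ih _ (by omega) hF' hG' hF'ne hG'ne rfl
  obtain ⟨s, rfl⟩ := Finset.card_eq_one.1 (show F.card = 1 by have := hFne.card_pos; omega)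
  obtain ⟨t, rfl⟩ := Finset.card_eq_one.1 (show G.card = 1 by have := hGne.card_pos; omega)
  simpa using brunnMinkowskiIneq_of_isBox (hF.isBox s (Finset.mem_singleton_self s))
    (hG.isBox t (Finset.mem_singleton_self t))

lemma exists_isBoxPacking_approx {A : Set (ι → ℝ)} (hA : IsCompact A) (hAne : A.Nonempty)
    {δ : ℝ} (hδ : 0 < δ) : ∃ F : Finset (Set (ι → ℝ)), IsBoxPacking F ∧ F.Nonempty ∧
      A ⊆ ⋃₀ ↑F ∧ ⋃₀ ↑F ⊆ A + Metric.closedBall 0 δ := by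
  classical
  set idx : (ι → ℝ) → ι → ℤ := fun x j => ⌊x j / δ⌋
  have mem_cube : ∀ x, x ∈ gridCube δ (idx x) := fun x => (mem_gridCube_iff hδ).2 rfl
  obtain ⟨a, ha⟩ := hA.isBounded.bddBelow
  obtain ⟨b, hb⟩ := hA.isBounded.bddAbove
  have hfin : (idx '' A).Finite := (finite_Icc (idx a) (idx b)).subset <| by
    rintro _ ⟨x, hx, rfl⟩
    exact ⟨fun j => Int.floor_mono (div_le_div_of_nonneg_right (ha hx j) hδ.le),
      fun j => Int.floor_mono (div_le_div_of_nonneg_right (hb hx j) hδ.le)⟩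
  refine ⟨hfin.toFinset.image (gridCube δ), ⟨?_, ?_⟩, ?_, ?_, ?_⟩
  · simp only [Finset.mem_image, forall_exists_index, and_imp]
    rintro _ m - rfl
    exact isBox_gridCube hδ m
  · simp only [Finset.coe_image]
    rintro _ ⟨m, -, rfl⟩ _ ⟨m', -, rfl⟩ hmm'
    refine disjoint_left.2 fun x hx hx' => hmm' ?_
    rw [id, mem_gridCube_iff hδ] at hx hx'
    rw [← hx, hx']
  · obtain ⟨x, hx⟩ := hAne
    exact ⟨_, Finset.mem_image_of_mem _ (hfin.mem_toFinset.2 (mem_image_of_mem idx hx))⟩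
  · intro x hx
    exact ⟨_, Finset.mem_image_of_mem _ (hfin.mem_toFinset.2 (mem_image_of_mem idx hx)),
      mem_cube x⟩
  · simp only [Finset.coe_image, Finite.coe_toFinset, sUnion_image, mem_image, iUnion_exists,
      biUnion_and', iUnion_iUnion_eq_right, subset_def, mem_iUnion]
    rintro y ⟨x, hx, hy⟩
    exact ⟨x, hx, y - x, mem_closedBall_zero_iff.2 (norm_sub_le_of_mem_gridCube hδ (mem_cube x) hy),
      add_sub_cancel _ _⟩

open Filter Topology Metric in
theorem brunnMinkowskiIneq_of_isCompact [Nonempty ι] {A B : Set (ι → ℝ)} (hA : IsCompact A)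
    (hB : IsCompact B) (hAne : A.Nonempty) (hBne : B.Nonempty) : BrunnMinkowskiIneq A B := by
  set p : ℝ := (Fintype.card ι : ℝ)⁻¹
  have hp : 0 ≤ p := by positivity
  have hAB := hA.add hB
  have approx : ∀ δ > 0, volume.real A ^ p + volume.real B ^ p ≤
      volume.real (cthickening (2 * δ) (A + B)) ^ p := by
    intro δ hδ
    obtain ⟨F, hF, hFne, hAF, hFA⟩ := exists_isBoxPacking_approx hA hAne hδ
    obtain ⟨G, hG, hGne, hBG, hGB⟩ := exists_isBoxPacking_approx hB hBne hδ
    have hsub : ⋃₀ (F : Set (Set (ι → ℝ))) + ⋃₀ ↑G ⊆ cthickening (2 * δ) (A + B) := by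
      refine (add_subset_add hFA hGB).trans_eq ?_
      rw [add_add_add_comm, closedBall_add_closedBall hδ.le hδ.le, add_zero, ← two_mul,
        hAB.add_closedBall_zero (by positivity)]
    calc _ ≤ volume.real (⋃₀ (F : Set (Set (ι → ℝ)))) ^ p + volume.real (⋃₀ ↑G) ^ p :=
          add_le_add
            (Real.rpow_le_rpow measureReal_nonneg
              (measureReal_mono hAF hF.isBounded.measure_lt_top.ne) hp)
            (Real.rpow_le_rpow measureReal_nonneg
              (measureReal_mono hBG hG.isBounded.measure_lt_top.ne) hp)
      _ ≤ volume.real (⋃₀ (F : Set (Set (ι → ℝ))) + ⋃₀ ↑G) ^ p := by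
          have h := hF.brunnMinkowskiIneq hG hFne hGne
          rwa [BrunnMinkowskiIneq] at h
      _ ≤ _ := Real.rpow_le_rpow measureReal_nonneg
          (measureReal_mono hsub (hAB.cthickening.measure_lt_top.ne)) hp
  have lim : Tendsto (fun δ => volume.real (cthickening (2 * δ) (A + B)) ^ p) (𝓝[>] 0)
      (𝓝 (volume.real (A + B) ^ p)) := by
    have h2δ : Tendsto (fun δ : ℝ => 2 * δ) (𝓝[>] 0) (𝓝 0) := by
      simpa using ((continuous_const_mul (2 : ℝ)).tendsto 0).mono_left nhdsWithin_le_nhds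
    exact ((ENNReal.tendsto_toReal hAB.measure_lt_top.ne).comp
      ((tendsto_measure_cthickening_of_isCompact hAB).comp h2δ)).rpow_const (.inr hp)
  exact ge_of_tendsto lim (eventually_mem_nhdsWithin.mono approx)

end Boxes

section Euclidean

variable {ι : Type*} [Fintype ι]

lemma volume_real_image_ofLp (S : Set (EuclideanSpace ℝ ι)) :
    volume.real (WithLp.ofLp '' S) = volume.real S := by
  rw [← MeasurableEquiv.coe_toLp_symm, MeasurableEquiv.image_symm, Measure.real, Measure.real,
    MeasurePreserving.measure_preimage_equiv (PiLp.volume_preserving_toLp ι)]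

theorem brunnMinkowski_euclideanSpace [Nonempty ι] {A B : Set (EuclideanSpace ℝ ι)}
    (hA : IsCompact A) (hB : IsCompact B) (hAne : A.Nonempty) (hBne : B.Nonempty) :
    volume.real A ^ (Fintype.card ι : ℝ)⁻¹ + volume.real B ^ (Fintype.card ι : ℝ)⁻¹ ≤
      volume.real (A + B) ^ (Fintype.card ι : ℝ)⁻¹ := by
  have h := brunnMinkowskiIneq_of_isCompact (hA.image (PiLp.continuous_ofLp 2 _))
    (hB.image (PiLp.continuous_ofLp 2 _)) (hAne.image _) (hBne.image _)
  have himage : WithLp.ofLp '' (A + B) = WithLp.ofLp '' A + WithLp.ofLp '' B :=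
    image_add (WithLp.linearEquiv 2 ℝ (ι → ℝ))
  rwa [BrunnMinkowskiIneq, ← himage, volume_real_image_ofLp, volume_real_image_ofLp,
    volume_real_image_ofLp] at h

lemma volume_real_smul_of_nonneg {r : ℝ} (hr : 0 ≤ r) (S : Set (EuclideanSpace ℝ ι)) :
    volume.real (r • S) = r ^ Fintype.card ι * volume.real S := by
  rw [Measure.real, Measure.addHaar_smul_of_nonneg _ hr, ENNReal.toReal_mul,
    ENNReal.toReal_ofReal (by positivity), finrank_euclideanSpace, Measure.real]

lemma volume_le_volume_half_smul_sub_self {A : Set (EuclideanSpace ℝ ι)} (hA : IsCompact A) :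
    volume A ≤ volume ((2⁻¹ : ℝ) • (A - A)) := by
  rcases A.eq_empty_or_nonempty with rfl | hAne
  · simp
  have hAA : IsCompact ((2⁻¹ : ℝ) • (A - A)) := by
    rw [sub_eq_add_neg]
    exact (hA.add hA.neg).smul _
  cases isEmpty_or_nonempty ι
  · rw [((hAne.sub hAne).smul_set).eq_univ]
    exact measure_mono (subset_univ A)
  rw [← ENNReal.toReal_le_toReal hA.measure_lt_top.ne hAA.measure_lt_top.ne]
  have hn : Fintype.card ι ≠ 0 := Fintype.card_ne_zero
  have h := brunnMinkowski_euclideanSpace (hA.smul (2⁻¹ : ℝ)) (hA.neg.smul (2⁻¹ : ℝ))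
    hAne.smul_set hAne.neg.smul_set
  have half : ((2⁻¹ : ℝ) ^ Fintype.card ι * volume.real A) ^ (Fintype.card ι : ℝ)⁻¹ =
      2⁻¹ * volume.real A ^ (Fintype.card ι : ℝ)⁻¹ := by
    rw [Real.mul_rpow (by positivity) measureReal_nonneg,
      Real.pow_rpow_inv_natCast (by norm_num) hn]
  have hneg : volume.real (-A) = volume.real A := by
    rw [Measure.real, Measure.measure_neg, Measure.real]
  rw [← smul_add, ← sub_eq_add_neg, volume_real_smul_of_nonneg (by norm_num),
    volume_real_smul_of_nonneg (by norm_num), hneg, half] at h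
  exact (Real.rpow_le_rpow_iff (z := (Fintype.card ι : ℝ)⁻¹) measureReal_nonneg measureReal_nonneg
    (by positivity)).1 (by linarith)

end Euclidean

lemma half_smul_sub_self_subset {E : Type*} [AddCommGroup E] [Module ℝ E] {C : Set E}
    (hC : Convex ℝ C) (hCs : C = -C) : (2⁻¹ : ℝ) • (C - C) ⊆ C := by
  rintro _ ⟨_, ⟨x, hx, y, hy, rfl⟩, rfl⟩
  have hy' : -y ∈ C := by rw [hCs, neg_mem_neg]; exact hy
  convert hC hx hy' (by norm_num : (0 : ℝ) ≤ 2⁻¹) (by norm_num : (0 : ℝ) ≤ 2⁻¹) (by norm_num)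
    using 1
  simp only [sub_eq_add_neg, smul_add, smul_neg]

lemma image_add_left_sub_self {E : Type*} [AddCommGroup E] (z : E) (S : Set E) :
    (fun x => z + x) '' S - (fun x => z + x) '' S = S - S := by
  rw [← singleton_add, add_sub_add_comm, singleton_sub_singleton, sub_self, singleton_zero,
    zero_add]

end BrunnMinkowski

open BrunnMinkowski in
theorem statement15 (n : ℕ) (K L : Set (EuclideanSpace ℝ (Fin n)))
    (hKc : IsCompact K) (hLc : IsCompact L)
    (hKconv : Convex ℝ K) (hLconv : Convex ℝ L)
    (hKs : K = -K) (hLs : L = -L) (z : EuclideanSpace ℝ (Fin n)) :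
    volume (K ∩ ((fun x => z + x) '' L)) ≤ volume (K ∩ L) := by
  set A := K ∩ (fun x => z + x) '' L
  have hA : IsCompact A := hKc.inter_right (hLc.image (continuous_const_add z)).isClosed
  have hAK : (2⁻¹ : ℝ) • (A - A) ⊆ K :=
    (smul_set_mono (sub_subset_sub inter_subset_left inter_subset_left)).trans
      (half_smul_sub_self_subset hKconv hKs)
  have hAL : (2⁻¹ : ℝ) • (A - A) ⊆ L := by
    refine (smul_set_mono ?_).trans (half_smul_sub_self_subset hLconv hLs)
    rw [← image_add_left_sub_self z L]
    exact sub_subset_sub inter_subset_right inter_subset_right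
  exact (volume_le_volume_half_smul_sub_self hA).trans (measure_mono (subset_inter hAK hAL))
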